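/- arXiv:2503.02171 — 4 statements merged into one kernel-verified Lean document; each statement's English description precedes it below -/
import Mathlib

section
/- If the pair (A,B) is controllable in the PBH sense and the pair (Q,A) is observable in the PBH sense, then—counting algebraic multiplicity, i.e. in the multiset of complex roots of the characteristic polynomial of H—the Hamiltonian matrix H has exactly n eigenvalues with positive real part and exactly n eigenvalues with negative real part. -/
/-!
The spectrum of `H` is symmetric under `z ↦ -z`, multiplicities included, because
`J = [[0, 1], [-1, 0]]` conjugates `H` to `-Hᵀ`. No eigenvalue lies on the imaginary axis: for an
eigenvector `(x, y)` with eigenvalue `z = -conj z`, the two block rows give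
`x*Qx + y*BR⁻¹Bᵀy = 0`, so `Qx = 0` and `Bᵀy = 0`; then `x` is an eigenvector of `A` killed by `Q`
and `y` an eigenvector of `Aᵀ` killed by `Bᵀ`, which observability and controllability forbid.
So the `2n` roots split evenly between the two open half-planes.
-/

open Matrix Polynomial
open scoped ComplexOrder MatrixOrder

namespace Matrix

section Charpoly

variable {ι R : Type*} [Fintype ι] [DecidableEq ι]

theorem charpoly_neg [CommRing R] (M : Matrix ι ι R) :
    (-M).charpoly = (-1) ^ Fintype.card ι * M.charpoly.comp (-X) := by
  have hmap : (charmatrix M).map (compRingHom (-X : R[X])) = -charmatrix (-M) := by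
    ext i j : 1
    by_cases h : i = j <;> simp [h]
    ring
  rw [charpoly, charpoly, ← coe_compRingHom_apply, RingHom.map_det, RingHom.mapMatrix_apply,
    hmap, det_neg, ← mul_assoc, ← mul_pow, neg_one_mul, neg_neg, one_pow, one_mul]

theorem roots_charpoly_neg [CommRing R] [IsDomain R] (M : Matrix ι ι R) :
    (-M).charpoly.roots = M.charpoly.roots.map Neg.neg := by
  rw [charpoly_neg, ← C_1, ← C_neg, ← C_pow,
    roots_C_mul _ (pow_ne_zero _ (neg_ne_zero.2 one_ne_zero)), roots_comp_neg_X]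

theorem charpoly_neg_fromBlocks_neg_transpose [CommRing R] {A S Q : Matrix ι ι R}
    (hS : S.IsSymm) (hQ : Q.IsSymm) :
    (-fromBlocks A S Q (-Aᵀ)).charpoly = (fromBlocks A S Q (-Aᵀ)).charpoly := by
  set J : Matrix (ι ⊕ ι) (ι ⊕ ι) R := fromBlocks 0 1 (-1) 0
  have hJJ : J * J = -1 := by
    rw [fromBlocks_multiply, ← fromBlocks_one, fromBlocks_neg]
    simp
  have hconj : (-fromBlocks A S Q (-Aᵀ))ᵀ = J * fromBlocks A S Q (-Aᵀ) * -J := by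
    simp [J, fromBlocks_transpose, fromBlocks_multiply, fromBlocks_neg, hS.eq, hQ.eq]
  rw [← charpoly_transpose, hconj, charpoly_mul_comm, ← mul_assoc, neg_mul, hJJ, neg_neg,
    one_mul]

theorem exists_mulVec_eq_smul_of_isRoot_charpoly {K : Type*} [Field K] {M : Matrix ι ι K}
    {z : K} (hz : M.charpoly.IsRoot z) : ∃ v ≠ 0, M *ᵥ v = z • v := by
  have hdet := hz.eq_zero
  rw [eval_charpoly] at hdet
  obtain ⟨v, hv, hMv⟩ := exists_mulVec_eq_zero_iff.2 hdet
  refine ⟨v, hv, ?_⟩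
  rw [sub_mulVec, sub_eq_zero, scalar_apply, ← smul_one_eq_diagonal, smul_mulVec,
    one_mulVec] at hMv
  exact hMv.symm

end Charpoly

theorem star_dotProduct_conjTranspose_mulVec {n α : Type*} [Fintype n] [CommSemiring α]
    [StarRing α] (M : Matrix n n α) (u v : n → α) :
    star u ⬝ᵥ Mᴴ *ᵥ v = star (star v ⬝ᵥ M *ᵥ u) := by
  rw [star_dotProduct, star_mulVec, conjTranspose_conjTranspose, dotProduct_mulVec]

section Complexification

theorem conjTranspose_map_ofReal {m n : Type*} (A : Matrix m n ℝ) :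
    (A.map Complex.ofReal)ᴴ = Aᵀ.map Complex.ofReal := by
  ext
  simp

theorem fromBlocks_map_ofReal_hamiltonian {n m : Type*} [Fintype m] (A Q : Matrix n n ℝ)
    (B : Matrix n m ℝ) (N : Matrix m m ℝ) :
    (fromBlocks A (-(B * N * Bᵀ)) (-Q) (-Aᵀ)).map Complex.ofReal =
      fromBlocks (A.map Complex.ofReal)
        (-(B.map Complex.ofReal * N.map Complex.ofReal * (B.map Complex.ofReal)ᴴ))
        (-Q.map Complex.ofReal) (-(A.map Complex.ofReal)ᴴ) := by
  rw [fromBlocks_map, conjTranspose_map_ofReal, conjTranspose_map_ofReal]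
  congr 1
  all_goals ext; simp [Matrix.mul_apply]

variable {n : Type*} [Fintype n] [DecidableEq n]

theorem PosSemidef.map_ofReal {M : Matrix n n ℝ} (hM : M.PosSemidef) :
    (M.map Complex.ofReal).PosSemidef := by
  obtain ⟨B, rfl⟩ := CStarAlgebra.nonneg_iff_eq_star_mul_self.mp hM.nonneg
  have h := posSemidef_conjTranspose_mul_self (B.map Complex.ofReal)
  rw [conjTranspose_map_ofReal] at h
  rw [star_eq_conjTranspose, conjTranspose_eq_transpose_of_trivial]
  convert h using 1
  exact Matrix.map_mul (f := Complex.ofRealHom)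

theorem PosDef.map_ofReal {M : Matrix n n ℝ} (hM : M.PosDef) :
    (M.map Complex.ofReal).PosDef :=
  hM.posSemidef.map_ofReal.posDef_iff_isUnit.2 (hM.isUnit.map Complex.ofRealHom.mapMatrix)

end Complexification

section HamiltonianSpectrum

variable {𝕜 n m : Type*} [RCLike 𝕜] [Fintype n] [Fintype m]

theorem star_dotProduct_mulVec_add_eq_zero_of_hamiltonian {A Q S : Matrix n n 𝕜}
    (hQ : Q.IsHermitian) {z : 𝕜} (hz : star z = -z) {x y : n → 𝕜}
    (hx : A *ᵥ x - S *ᵥ y = z • x) (hy : -(Q *ᵥ x) - Aᴴ *ᵥ y = z • y) :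
    star x ⬝ᵥ Q *ᵥ x + star y ⬝ᵥ S *ᵥ y = 0 := by
  have h₁ := congrArg (star y ⬝ᵥ ·) hx
  have h₂ := congrArg (fun u => star (star x ⬝ᵥ u)) hy
  simp only [dotProduct_sub, dotProduct_neg, dotProduct_smul, smul_eq_mul, star_sub, star_neg,
    star_mul', star_dotProduct_conjTranspose_mulVec, star_star, hz] at h₁ h₂
  rw [← star_dotProduct_conjTranspose_mulVec, hQ.eq, ← star_dotProduct] at h₂
  linear_combination -h₁ - h₂

theorem eq_zero_of_hamiltonian_mulVec_eq_smul_of_re_eq_zero {A Q : Matrix n n 𝕜}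
    {B : Matrix n m 𝕜} {N : Matrix m m 𝕜} (hQ : Q.PosSemidef) (hN : N.PosDef)
    (hctrb : ∀ (l : 𝕜) (y : n → 𝕜), y ≠ 0 → Aᴴ *ᵥ y = l • y → Bᴴ *ᵥ y ≠ 0)
    (hobs : ∀ (l : 𝕜) (x : n → 𝕜), x ≠ 0 → A *ᵥ x = l • x → Q *ᵥ x ≠ 0)
    {z : 𝕜} (hz : RCLike.re z = 0) {v : n ⊕ n → 𝕜}
    (hv : fromBlocks A (-(B * N * Bᴴ)) (-Q) (-Aᴴ) *ᵥ v = z • v) : v = 0 := by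
  obtain ⟨x, y, rfl⟩ : ∃ x y, v = Sum.elim x y := ⟨_, _, (Sum.elim_comp_inl_inr v).symm⟩
  have hsmul : z • Sum.elim x y = Sum.elim (z • x) (z • y) := by ext (i | i) <;> rfl
  rw [fromBlocks_mulVec, hsmul, Sum.elim_eq_iff] at hv
  simp only [Sum.elim_comp_inl, Sum.elim_comp_inr, neg_mulVec, ← sub_eq_add_neg] at hv
  obtain ⟨hx, hy⟩ := hv
  set w := Bᴴ *ᵥ y
  have hS : (B * N * Bᴴ) *ᵥ y = B *ᵥ N *ᵥ w := by simp only [w, mulVec_mulVec, Matrix.mul_assoc]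
  have hSy : star y ⬝ᵥ (B * N * Bᴴ) *ᵥ y = star w ⬝ᵥ N *ᵥ w := by
    rw [hS, dotProduct_mulVec, ← conjTranspose_conjTranspose B, ← star_mulVec]
  have hsum := star_dotProduct_mulVec_add_eq_zero_of_hamiltonian hQ.isHermitian
    (by rw [RCLike.star_def]; apply RCLike.ext <;> simp [hz]) hx hy
  rw [hSy] at hsum
  obtain ⟨hQx, hNw⟩ := (add_eq_zero_iff_of_nonneg (hQ.dotProduct_mulVec_nonneg x)
    (hN.posSemidef.dotProduct_mulVec_nonneg w)).1 hsum
  replace hQx : Q *ᵥ x = 0 := (hQ.dotProduct_mulVec_zero_iff x).1 hQx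
  have hw : w = 0 := by
    by_contra hw
    exact (hN.dotProduct_mulVec_pos hw).ne' hNw
  have hAx : A *ᵥ x = z • x := by rwa [hS, hw, mulVec_zero, mulVec_zero, sub_zero] at hx
  have hAy : Aᴴ *ᵥ y = (-z) • y := by
    rw [hQx, neg_zero, zero_sub, neg_eq_iff_eq_neg] at hy
    rw [hy, neg_smul]
  have hx0 : x = 0 := by_contra fun h => hobs z x h hAx hQx
  have hy0 : y = 0 := by_contra fun h => hctrb (-z) y h hAy hw
  rw [hx0, hy0, Sum.elim_zero_zero]

end HamiltonianSpectrum

end Matrix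

theorem Multiset.card_filter_re_pos_eq_and_card_filter_re_neg_eq {s : Multiset ℂ} {n : ℕ}
    (hs : s.map Neg.neg = s) (hre : ∀ z ∈ s, z.re ≠ 0) (hcard : Multiset.card s = n + n) :
    Multiset.card (s.filter fun z => 0 < z.re) = n ∧
      Multiset.card (s.filter fun z => z.re < 0) = n := by
  have hsymm : Multiset.card (s.filter fun z => z.re < 0) =
      Multiset.card (s.filter fun z => 0 < z.re) := by
    conv_lhs => rw [← hs]
    simp [Multiset.filter_map]
  have hsplit : (s.filter fun z => ¬0 < z.re) = s.filter fun z => z.re < 0 :=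
    Multiset.filter_congr fun z hz => by simpa [not_lt] using (hre z hz).le_iff_lt
  have htotal := congrArg Multiset.card (Multiset.filter_add_not (fun z => 0 < z.re) s)
  rw [Multiset.card_add, hsplit, hcard] at htotal
  omega

/-- Under PBH controllability of `(A,B)` and PBH observability of `(Q,A)`,
counting algebraic multiplicity (roots of the characteristic polynomial), the Hamiltonian
matrix `H = [[A, −BR⁻¹Bᵀ], [−Q, −Aᵀ]]` has exactly `n` eigenvalues with positive real part
and exactly `n` eigenvalues with negative real part. -/
theorem hamiltonian_eigenvalue_count {n m : ℕ}
    (A Q : Matrix (Fin n) (Fin n) ℝ) (B : Matrix (Fin n) (Fin m) ℝ)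
    (R : Matrix (Fin m) (Fin m) ℝ)
    (hQ : Q.PosSemidef) (hR : R.PosDef)
    (hctrb : ∀ (l : ℂ) (y : Fin n → ℂ), y ≠ 0 →
      (A.map Complex.ofReal)ᵀ.mulVec y = l • y → (B.map Complex.ofReal)ᵀ.mulVec y ≠ 0)
    (hobs : ∀ (l : ℂ) (x : Fin n → ℂ), x ≠ 0 →
      (A.map Complex.ofReal).mulVec x = l • x → (Q.map Complex.ofReal).mulVec x ≠ 0) :
    Multiset.card
        ((((Matrix.fromBlocks A (-(B * R⁻¹ * Bᵀ)) (-Q) (-Aᵀ)).map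
            Complex.ofReal).charpoly.roots).filter fun z => 0 < z.re) = n ∧
    Multiset.card
        ((((Matrix.fromBlocks A (-(B * R⁻¹ * Bᵀ)) (-Q) (-Aᵀ)).map
            Complex.ofReal).charpoly.roots).filter fun z => z.re < 0) = n := by
  have hS : (B * R⁻¹ * Bᵀ).IsSymm := by
    have hRinv : R⁻¹.IsSymm := isHermitian_iff_isSymm.1 hR.inv.isHermitian
    simp [IsSymm, transpose_mul, hRinv.eq, Matrix.mul_assoc]
  refine Multiset.card_filter_re_pos_eq_and_card_filter_re_neg_eq ?_ ?_ ?_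
  · have hneg := congrArg (Polynomial.map Complex.ofRealHom)
      (charpoly_neg_fromBlocks_neg_transpose (A := A) hS.neg
        (isHermitian_iff_isSymm.1 hQ.isHermitian).neg)
    rw [← charpoly_map, ← charpoly_map, Matrix.map_neg _ (map_neg Complex.ofRealHom)] at hneg
    rw [← roots_charpoly_neg]
    exact congrArg roots hneg
  · intro z hz hre
    obtain ⟨v, hv, hHv⟩ := exists_mulVec_eq_smul_of_isRoot_charpoly (isRoot_of_mem_roots hz)
    rw [fromBlocks_map_ofReal_hamiltonian] at hHv
    refine hv (eq_zero_of_hamiltonian_mulVec_eq_smul_of_re_eq_zero hQ.map_ofReal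
      hR.inv.map_ofReal ?_ hobs hre hHv)
    simpa only [conjTranspose_map_ofReal, transpose_map] using hctrb
  · rw [IsAlgClosed.card_roots_eq_natDegree, charpoly_natDegree_eq_dim, Fintype.card_sum,
      Fintype.card_fin]
end

section
/- Let τ > 0. Suppose P and P′ are symmetric real n×n matrices that both satisfy the discounted algebraic Riccati equation AᵀP + PA − PBR⁻¹BᵀP + Q = (1/τ)·P, and suppose both closed-loop matrices A − BR⁻¹BᵀP and A − BR⁻¹BᵀP′ are Hurwitz (every complex eigenvalue has negative real part). Then P = P′. In other words, for the discounted LQR problem at most one symmetric solution of the Bellman/HJB equation results in a stable closed-loop system. -/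
/-!
The difference `Δ = P - P'` of two solutions satisfies the Sylvester equation
`(τ⁻¹ • 1 - F'ᵀ) Δ = Δ F` with the closed-loop matrices `F = A - SP`, `F' = A - SP'`,
`S = BR⁻¹Bᵀ`. Since `F` and `F'` are Hurwitz and `τ > 0`, the spectrum of `F` lies in
`Re < 0` while that of `τ⁻¹ • 1 - F'ᵀ` lies in `Re > τ⁻¹`. A Sylvester equation whose two
coefficients have disjoint spectra only has the trivial solution: `Δ` maps each generalized
eigenspace of `F` into the generalized eigenspace of `τ⁻¹ • 1 - F'ᵀ` for the same eigenvalue,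
which is zero, and the generalized eigenspaces of `F` span `ℂⁿ`.
-/

open Matrix

namespace Module.End

theorem maxGenEigenspace_eq_bot_of_not_hasEigenvalue {R M : Type*} [CommRing R] [AddCommGroup M]
    [Module R M] {f : End R M} {μ : R} (hμ : ¬f.HasEigenvalue μ) : f.maxGenEigenspace μ = ⊥ := by
  by_contra h
  exact hμ (HasUnifEigenvalue.lt zero_lt_one h)

variable {K V W : Type*} [Field K] [AddCommGroup V] [Module K V] [AddCommGroup W] [Module K W]

theorem eq_zero_of_comp_eq_comp_of_disjoint_spectrum [IsAlgClosed K] [FiniteDimensional K V]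
    [FiniteDimensional K W] {f : End K V} {g : End K W} {d : V →ₗ[K] W}
    (hfg : Disjoint (spectrum K f) (spectrum K g)) (hd : d ∘ₗ f = g ∘ₗ d) : d = 0 := by
  have hmaps (μ : K) {v : V} (hv : v ∈ f.maxGenEigenspace μ) : d v ∈ g.maxGenEigenspace μ := by
    obtain ⟨k, hk⟩ := (mem_maxGenEigenspace f μ v).1 hv
    have hdμ : (g - μ • 1) ∘ₗ d = d ∘ₗ (f - μ • 1) := by
      rw [LinearMap.sub_comp, LinearMap.comp_sub, hd]; ext; simp
    refine (mem_maxGenEigenspace g μ _).2 ⟨k, ?_⟩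
    rw [← LinearMap.comp_apply, commute_pow_left_of_commute hdμ, LinearMap.comp_apply, hk,
      map_zero]
  have hker : ⨆ μ, f.maxGenEigenspace μ ≤ LinearMap.ker d := by
    refine iSup_le fun μ v hv => ?_
    by_cases hμ : f.HasEigenvalue μ
    · have hgμ : ¬g.HasEigenvalue μ := fun h =>
        hfg.notMem_of_mem_left hμ.mem_spectrum h.mem_spectrum
      simpa [maxGenEigenspace_eq_bot_of_not_hasEigenvalue hgμ] using hmaps μ hv
    · simp_all [maxGenEigenspace_eq_bot_of_not_hasEigenvalue hμ]
  rwa [iSup_maxGenEigenspace_eq_top, top_le_iff, LinearMap.ker_eq_top] at hker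

end Module.End

namespace Matrix

variable {K m n : Type*} [Fintype m] [Fintype n] [DecidableEq m] [DecidableEq n]

theorem spectrum_transpose [CommRing K] (M : Matrix n n K) : spectrum K Mᵀ = spectrum K M := by
  ext μ
  rw [spectrum.mem_iff, spectrum.mem_iff, ← isUnit_transpose, transpose_sub,
    algebraMap_eq_diagonal, diagonal_transpose, transpose_transpose]

theorem exists_mulVec_eq_smul_of_mem_spectrum [Field K] {M : Matrix n n K} {μ : K}
    (hμ : μ ∈ spectrum K M) : ∃ v ≠ 0, M *ᵥ v = μ • v := by
  rw [← spectrum_toLin', ← Module.End.hasEigenvalue_iff_mem_spectrum] at hμ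
  obtain ⟨v, hv⟩ := hμ.exists_hasEigenvector
  exact ⟨v, hv.2, by simpa using hv.apply_eq_smul⟩

theorem eq_zero_of_mul_eq_mul_of_disjoint_spectrum [Field K] [IsAlgClosed K]
    {M : Matrix m m K} {N : Matrix n n K} {D : Matrix m n K}
    (hMN : Disjoint (spectrum K N) (spectrum K M)) (hD : M * D = D * N) : D = 0 := by
  refine toLin'.map_eq_zero_iff.1 <|
    Module.End.eq_zero_of_comp_eq_comp_of_disjoint_spectrum (f := toLin' N) (g := toLin' M) ?_ ?_
  · rwa [spectrum_toLin', spectrum_toLin']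
  · rw [← toLin'_mul, ← toLin'_mul, hD]

def IsHurwitz (M : Matrix n n ℝ) : Prop :=
  ∀ (μ : ℂ) (v : n → ℂ), v ≠ 0 → M.map Complex.ofReal *ᵥ v = μ • v → μ.re < 0

theorem IsHurwitz.re_lt_zero {M : Matrix n n ℝ} (hM : M.IsHurwitz) {μ : ℂ}
    (hμ : μ ∈ spectrum ℂ (M.map Complex.ofReal)) : μ.re < 0 :=
  let ⟨v, hv, hMv⟩ := exists_mulVec_eq_smul_of_mem_spectrum hμ
  hM μ v hv hMv

theorem IsHurwitz.disjoint_spectrum_smul_one_sub_transpose {M N : Matrix n n ℝ}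
    (hM : M.IsHurwitz) (hN : N.IsHurwitz) {c : ℝ} (hc : 0 ≤ c) :
    Disjoint (spectrum ℂ (N.map Complex.ofReal))
      (spectrum ℂ (c • 1 - (M.map Complex.ofReal)ᵀ)) := by
  refine Set.disjoint_left.2 fun μ hμN hμM => ?_
  rw [← algebraMap_smul ℂ c, ← Algebra.algebraMap_eq_smul_one, ← spectrum.singleton_sub_eq,
    spectrum_transpose] at hμM
  obtain ⟨_, rfl, ν, hν, rfl⟩ := hμM
  have hνre := hM.re_lt_zero hν
  have hμre := hN.re_lt_zero hμN
  simp only [Complex.sub_re, Complex.coe_algebraMap, Complex.ofReal_re] at hμre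
  linarith

end Matrix

theorem sylvester_of_riccati {K n : Type*} [CommRing K] [Fintype n] [DecidableEq n]
    {A S Q P P' : Matrix n n K} (c : K) (hS : Sᵀ = S) (hP' : P'ᵀ = P')
    (hP_eq : Aᵀ * P + P * A - P * S * P + Q = c • P)
    (hP'_eq : Aᵀ * P' + P' * A - P' * S * P' + Q = c • P') :
    (c • 1 - (A - S * P')ᵀ) * (P - P') = (P - P') * (A - S * P) := by
  rw [transpose_sub, transpose_mul, hS, hP']
  linear_combination (norm := noncomm_ring) hP'_eq - hP_eq

theorem stabilizing_discounted_care_solution_unique_general {n m : ℕ}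
    (A Q : Matrix (Fin n) (Fin n) ℝ) (B : Matrix (Fin n) (Fin m) ℝ)
    (R : Matrix (Fin m) (Fin m) ℝ) (hRsymm : R.IsSymm)
    (τ : ℝ) (hτ : 0 < τ)
    (P P' : Matrix (Fin n) (Fin n) ℝ) (hP'symm : P'.IsSymm)
    (hP : Aᵀ * P + P * A - P * B * R⁻¹ * Bᵀ * P + Q = (1 / τ) • P)
    (hP' : Aᵀ * P' + P' * A - P' * B * R⁻¹ * Bᵀ * P' + Q = (1 / τ) • P')
    (hHurwitz : ∀ (μ : ℂ) (v : Fin n → ℂ), v ≠ 0 →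
      ((A - B * R⁻¹ * Bᵀ * P).map Complex.ofReal).mulVec v = μ • v → μ.re < 0)
    (hHurwitz' : ∀ (μ : ℂ) (v : Fin n → ℂ), v ≠ 0 →
      ((A - B * R⁻¹ * Bᵀ * P').map Complex.ofReal).mulVec v = μ • v → μ.re < 0) :
    P = P' := by
  have hS : (B * R⁻¹ * Bᵀ)ᵀ = B * R⁻¹ * Bᵀ := by
    rw [transpose_mul, transpose_mul, transpose_transpose, transpose_nonsing_inv, hRsymm.eq,
      Matrix.mul_assoc]
  have hSylvester := sylvester_of_riccati (A := A) (Q := Q) (P := P) (P' := P') (1 / τ) hS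
    hP'symm.eq    (by simpa only [Matrix.mul_assoc] using hP) (by simpa only [Matrix.mul_assoc] using hP')
  -- `Algebra.ofId ℝ ℂ` is `Complex.ofReal` definitionally, which is how the lemmas below apply.
  have hSylvesterC := congrArg (Algebra.ofId ℝ ℂ).mapMatrix hSylvester
  rw [map_mul, map_mul, map_sub, map_smul, map_one] at hSylvesterC
  have hΔ := eq_zero_of_mul_eq_mul_of_disjoint_spectrum
    (IsHurwitz.disjoint_spectrum_smul_one_sub_transpose hHurwitz' hHurwitz (by positivity))
    hSylvesterC
  exact sub_eq_zero.1 (map_injective Complex.ofReal_injective hΔ)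

/-- For the discounted LQR problem, at most one symmetric solution of the
discounted algebraic Riccati equation `AᵀP + PA − PBR⁻¹BᵀP + Q = (1/τ)·P` yields a Hurwitz
(stable) closed-loop matrix. -/
theorem stabilizing_discounted_care_solution_unique {n m : ℕ}
    (A Q : Matrix (Fin n) (Fin n) ℝ) (B : Matrix (Fin n) (Fin m) ℝ)
    (R : Matrix (Fin m) (Fin m) ℝ) (hRsymm : R.IsSymm) (hR : IsUnit R)
    (τ : ℝ) (hτ : 0 < τ)
    (P P' : Matrix (Fin n) (Fin n) ℝ) (hPsymm : P.IsSymm) (hP'symm : P'.IsSymm)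
    (hP : Aᵀ * P + P * A - P * B * R⁻¹ * Bᵀ * P + Q = (1 / τ) • P)
    (hP' : Aᵀ * P' + P' * A - P' * B * R⁻¹ * Bᵀ * P' + Q = (1 / τ) • P')
    (hHurwitz : ∀ (μ : ℂ) (v : Fin n → ℂ), v ≠ 0 →
      ((A - B * R⁻¹ * Bᵀ * P).map Complex.ofReal).mulVec v = μ • v → μ.re < 0)
    (hHurwitz' : ∀ (μ : ℂ) (v : Fin n → ℂ), v ≠ 0 →
      ((A - B * R⁻¹ * Bᵀ * P').map Complex.ofReal).mulVec v = μ • v → μ.re < 0) :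
    P = P' :=
  stabilizing_discounted_care_solution_unique_general A Q B R hRsymm τ hτ P P' hP'symm hP hP'
    hHurwitz hHurwitz'
end

section
/- If the pair (A,B) is controllable in the PBH sense and the pair (Q,A) is observable in the PBH sense, then the discrete-time Hamiltonian matrix H_d has no complex eigenvalue λ with |λ| = 1. -/
/-!
Write an eigenvector as `(x, y)` and put `T = B R⁻¹ Bᴴ`. The two block rows of `H_d v = λ v` say
`A x = λ (x + T y)` and `y - Q x = λ Aᴴ y`. Pairing the first with `y` and the conjugate of the
second with `x`, and using `|λ| = 1`, gives `x* Q x + y* T y = 0`. Both terms are nonnegative,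
so `Q x = 0` and `Bᴴ y = 0`; then `A x = λ x` and `Aᴴ y = λ⁻¹ y`, which contradicts observability
if `x ≠ 0` and controllability if `y ≠ 0`.
-/

open Matrix
open scoped ComplexOrder MatrixOrder

namespace Matrix

section ofReal

variable {l n m : Type*}

theorem conjTranspose_map_ofReal_s10 (M : Matrix n m ℝ) :
    (M.map Complex.ofReal)ᴴ = (M.map Complex.ofReal)ᵀ := by
  ext i j
  simp

theorem map_ofReal_mul [Fintype n] (L : Matrix l n ℝ) (M : Matrix n m ℝ) :
    (L * M).map Complex.ofReal = L.map Complex.ofReal * M.map Complex.ofReal :=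
  Matrix.map_mul (f := Complex.ofRealHom)

theorem PosSemidef.map_ofReal_s10 [Fintype n] {Q : Matrix n n ℝ} (hQ : Q.PosSemidef) :
    (Q.map Complex.ofReal).PosSemidef := by
  classical
  obtain ⟨N, rfl⟩ := CStarAlgebra.nonneg_iff_eq_star_mul_self.mp hQ.nonneg
  rw [star_eq_conjTranspose, map_ofReal_mul, conjTranspose_eq_transpose_of_trivial, transpose_map,
    ← conjTranspose_map_ofReal_s10]
  exact posSemidef_conjTranspose_mul_self _

theorem PosDef.map_ofReal_s10 [Fintype n] {R : Matrix n n ℝ} (hR : R.PosDef) :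
    (R.map Complex.ofReal).PosDef := by
  classical
  exact hR.posSemidef.map_ofReal_s10.posDef_iff_isUnit.mpr (hR.isUnit.map Complex.ofRealHom.mapMatrix)

end ofReal

variable {n m : Type*} [Fintype n] [Fintype m]

theorem star_dotProduct_mul_mul_conjTranspose_mulVec {α : Type*} [CommRing α] [StarRing α]
    (B : Matrix n m α) (W : Matrix m m α) (y : n → α) :
    star y ⬝ᵥ (B * W * Bᴴ) *ᵥ y = star (Bᴴ *ᵥ y) ⬝ᵥ W *ᵥ (Bᴴ *ᵥ y) := by
  simp only [star_mulVec, conjTranspose_conjTranspose, ← mulVec_mulVec, dotProduct_mulVec,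
    vecMul_vecMul]

variable [DecidableEq n]

section Ring

variable {α β : Type*}

/-- `G` stands for `A⁻ᴴ` and `T` for `B R⁻¹ Bᴴ`. -/
def discreteHamiltonian [Ring α] (A G T Q : Matrix n n α) : Matrix (n ⊕ n) (n ⊕ n) α :=
  fromBlocks (A + T * G * Q) (-(T * G)) (-(G * Q)) G

theorem discreteHamiltonian_map [Ring α] [Ring β] (f : α →+* β) (A G T Q : Matrix n n α) :
    (discreteHamiltonian A G T Q).map f =
      discreteHamiltonian (A.map f) (G.map f) (T.map f) (Q.map f) := by
  simp only [discreteHamiltonian, fromBlocks_map]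
  simp only [← RingHom.mapMatrix_apply, map_add, map_neg, map_mul]

theorem discreteHamiltonian_eigenvector_equations [CommRing α] [StarRing α]
    {A G T Q : Matrix n n α} (hG : Aᴴ * G = 1) {l : α} {v : n ⊕ n → α}
    (h : discreteHamiltonian A G T Q *ᵥ v = l • v) :
    A *ᵥ (v ∘ Sum.inl) = l • v ∘ Sum.inl + l • T *ᵥ (v ∘ Sum.inr) ∧
      v ∘ Sum.inr - Q *ᵥ (v ∘ Sum.inl) = l • Aᴴ *ᵥ (v ∘ Sum.inr) := by
  set x := v ∘ Sum.inl
  set y := v ∘ Sum.inr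
  rw [discreteHamiltonian, fromBlocks_mulVec] at h
  have h₁ : (A + T * G * Q) *ᵥ x + -(T * G) *ᵥ y = l • x := congrArg (· ∘ Sum.inl) h
  have h₂ : -(G * Q) *ᵥ x + G *ᵥ y = l • y := congrArg (· ∘ Sum.inr) h
  have hGy : G *ᵥ (y - Q *ᵥ x) = l • y := by
    rw [mulVec_sub, mulVec_mulVec, ← h₂, neg_mulVec]; abel
  have hy : y - Q *ᵥ x = l • Aᴴ *ᵥ y := by
    rw [← mulVec_smul, ← hGy, mulVec_mulVec, hG, one_mulVec]
  refine ⟨?_, hy⟩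
  rw [← h₁, add_mulVec, neg_mulVec, ← mulVec_mulVec, ← mulVec_mulVec, ← mulVec_mulVec,
    ← mulVec_smul, ← hGy]
  simp only [mulVec_sub]
  abel

end Ring

section RCLike

variable {𝕜 : Type*} [RCLike 𝕜]

omit [DecidableEq n] in
theorem dotProduct_mulVec_add_dotProduct_mulVec_eq_zero {A Q T : Matrix n n 𝕜}
    (hQ : Q.IsHermitian) {l : 𝕜} (hl : ‖l‖ = 1) {x y : n → 𝕜}
    (h₁ : A *ᵥ x = l • x + l • T *ᵥ y) (h₂ : y - Q *ᵥ x = l • Aᴴ *ᵥ y) :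
    star x ⬝ᵥ Q *ᵥ x + star y ⬝ᵥ T *ᵥ y = 0 := by
  have hAx : star y ⬝ᵥ A *ᵥ x = l * (star y ⬝ᵥ x + star y ⬝ᵥ T *ᵥ y) := by
    rw [h₁, dotProduct_add, dotProduct_smul, dotProduct_smul, smul_eq_mul, smul_eq_mul, mul_add]
  have hAy : star y ⬝ᵥ x - star x ⬝ᵥ Q *ᵥ x = star l * (star y ⬝ᵥ A *ᵥ x) := by
    simpa only [star_sub, star_smul, star_mulVec, hQ.eq, conjTranspose_conjTranspose,
      sub_dotProduct, smul_dotProduct, smul_eq_mul, ← dotProduct_mulVec]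
      using congrArg (star · ⬝ᵥ x) h₂
  have hl' : star l * l = 1 := by
    rw [RCLike.star_def, RCLike.conj_mul, hl]; simp
  linear_combination -hAy - star l * hAx - (star y ⬝ᵥ x + star y ⬝ᵥ T *ᵥ y) * hl'

theorem discreteHamiltonian_eigenvalue_norm_ne_one {A G Q : Matrix n n 𝕜} {B : Matrix n m 𝕜}
    {W : Matrix m m 𝕜} (hG : Aᴴ * G = 1) (hQ : Q.PosSemidef) (hW : W.PosDef)
    (hctrb : ∀ (l : 𝕜) (y : n → 𝕜), y ≠ 0 → Aᴴ *ᵥ y = l • y → Bᴴ *ᵥ y ≠ 0)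
    (hobs : ∀ (l : 𝕜) (x : n → 𝕜), x ≠ 0 → A *ᵥ x = l • x → Q *ᵥ x ≠ 0)
    {l : 𝕜} {v : n ⊕ n → 𝕜} (hv : v ≠ 0)
    (h : discreteHamiltonian A G (B * W * Bᴴ) Q *ᵥ v = l • v) : ‖l‖ ≠ 1 := by
  intro hl
  obtain ⟨h₁, h₂⟩ := discreteHamiltonian_eigenvector_equations hG h
  set x := v ∘ Sum.inl
  set y := v ∘ Sum.inr
  have hsum := dotProduct_mulVec_add_dotProduct_mulVec_eq_zero hQ.isHermitian hl h₁ h₂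
  rw [star_dotProduct_mul_mul_conjTranspose_mulVec] at hsum
  obtain ⟨hx, hz⟩ := (add_eq_zero_iff_of_nonneg (hQ.dotProduct_mulVec_nonneg _)
    (hW.posSemidef.dotProduct_mulVec_nonneg _)).mp hsum
  have hQx : Q *ᵥ x = 0 := (hQ.dotProduct_mulVec_zero_iff x).mp hx
  have hBy : Bᴴ *ᵥ y = 0 := by
    by_contra hne
    exact (hW.dotProduct_mulVec_pos hne).ne' hz
  have hl0 : l ≠ 0 := by rintro rfl; simp at hl
  by_cases hx0 : x = 0
  · have hy0 : y ≠ 0 := by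
      rintro hy0
      exact hv <| by rw [← Sum.elim_comp_inl_inr v, show v ∘ Sum.inl = 0 from hx0,
        show v ∘ Sum.inr = 0 from hy0, Sum.elim_zero_zero]
    refine hctrb l⁻¹ y hy0 ?_ hBy
    rw [hQx, sub_zero] at h₂
    conv_rhs => rw [h₂, smul_smul, inv_mul_cancel₀ hl0, one_smul]
  · refine hobs l x hx0 ?_ hQx
    rwa [← mulVec_mulVec, hBy, mulVec_zero, smul_zero, add_zero] at h₁

end RCLike

end Matrix

/-- Under PBH controllability of `(A,B)` and PBH observability of
`(Q,A)`, the discrete-time Hamiltonian matrix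
`H_d = [[A + BR⁻¹BᵀA⁻ᵀQ, −BR⁻¹BᵀA⁻ᵀ], [−A⁻ᵀQ, A⁻ᵀ]]` has no complex eigenvalue on the
unit circle. -/
theorem discrete_hamiltonian_no_unit_circle_eigenvalue {n m : ℕ}
    (A Q : Matrix (Fin n) (Fin n) ℝ) (hA : IsUnit A) (hQ : Q.PosSemidef)
    (B : Matrix (Fin n) (Fin m) ℝ)
    (R : Matrix (Fin m) (Fin m) ℝ) (hR : R.PosDef)
    (hctrb : ∀ (l : ℂ) (y : Fin n → ℂ), y ≠ 0 →
      (A.map Complex.ofReal)ᵀ.mulVec y = l • y → (B.map Complex.ofReal)ᵀ.mulVec y ≠ 0)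
    (hobs : ∀ (l : ℂ) (x : Fin n → ℂ), x ≠ 0 →
      (A.map Complex.ofReal).mulVec x = l • x → (Q.map Complex.ofReal).mulVec x ≠ 0) :
    ∀ (l : ℂ) (v : Fin n ⊕ Fin n → ℂ), v ≠ 0 →
      ((Matrix.fromBlocks (A + B * R⁻¹ * Bᵀ * (Aᵀ)⁻¹ * Q) (-(B * R⁻¹ * Bᵀ * (Aᵀ)⁻¹))
          (-((Aᵀ)⁻¹ * Q)) ((Aᵀ)⁻¹)).map Complex.ofReal).mulVec v = l • v →
      ‖l‖ ≠ 1 := by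
  intro l v hv h
  have hG : (A.map Complex.ofReal)ᴴ * (Aᵀ)⁻¹.map Complex.ofReal = 1 := by
    rw [conjTranspose_map_ofReal_s10, ← transpose_map, ← map_ofReal_mul,
      mul_nonsing_inv _ (by simpa [isUnit_iff_isUnit_det] using hA)]
    exact Matrix.map_one _ Complex.ofReal_zero Complex.ofReal_one
  have hT : (B * R⁻¹ * Bᵀ).map Complex.ofReal =
      B.map Complex.ofReal * R⁻¹.map Complex.ofReal * (B.map Complex.ofReal)ᴴ := by
    rw [conjTranspose_map_ofReal_s10, ← transpose_map, map_ofReal_mul, map_ofReal_mul]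
  have hH : (discreteHamiltonian A (Aᵀ)⁻¹ (B * R⁻¹ * Bᵀ) Q).map Complex.ofReal =
      discreteHamiltonian (A.map Complex.ofReal) ((Aᵀ)⁻¹.map Complex.ofReal)
        ((B * R⁻¹ * Bᵀ).map Complex.ofReal) (Q.map Complex.ofReal) :=
    discreteHamiltonian_map Complex.ofRealHom _ _ _ _
  change (discreteHamiltonian A (Aᵀ)⁻¹ (B * R⁻¹ * Bᵀ) Q).map Complex.ofReal *ᵥ v = l • v at h
  rw [hH, hT] at h
  exact discreteHamiltonian_eigenvalue_norm_ne_one hG hQ.map_ofReal_s10 hR.inv.map_ofReal_s10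
    (by simpa only [conjTranspose_map_ofReal_s10] using hctrb) hobs hv h
end

section
/- Suppose P₁, P₂ are complex n×n matrices and Λ₁ is a complex n×n diagonal matrix such that H_d·[P₁; P₂] = [P₁; P₂]·Λ₁ (matrices regarded over ℂ), and suppose both P₁ and P₂ are invertible. Let P := P₂·P₁⁻¹. Then R + BᵀPB is invertible and the discrete-time closed-loop matrix A_cl := A − B(R + BᵀPB)⁻¹BᵀPA satisfies A_cl = P₁·Λ₁·P₁⁻¹; in particular the eigenvalues of A_cl are exactly the diagonal entries of Λ₁. -/
/-! Eliminating the second block row of the eigen-equation gives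
`A P₁ = P₁ Λ + B R⁻¹ Bᵀ P₂ Λ`, i.e. `A = (1 + B R⁻¹ Bᵀ P) · P₁ Λ P₁⁻¹`. As `A` is invertible, so is
`1 + B R⁻¹ Bᵀ P`, hence (Sylvester's determinant identity) so is `R + Bᵀ P B`, and the Woodbury
identity `(1 + B R⁻¹ Bᵀ P)⁻¹ = 1 - B (R + Bᵀ P B)⁻¹ Bᵀ P` turns
`A_cl = (1 - B (R + Bᵀ P B)⁻¹ Bᵀ P) A` into `P₁ Λ P₁⁻¹`, whose spectrum is that of `Λ`. -/

open Matrix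

namespace Matrix

theorem mul_eq_of_fromBlocks_mul_fromRows {K n k : Type*} [Ring K] [Fintype n] [Fintype k]
    {a X C Q : Matrix n n K} {P₁ P₂ : Matrix n k K} {Λ : Matrix k k K}
    (h : fromBlocks (a + X * C * Q) (-(X * C)) (-(C * Q)) C * fromRows P₁ P₂ =
      fromRows P₁ P₂ * Λ) :
    a * P₁ = P₁ * Λ + X * (P₂ * Λ) := by
  rw [fromBlocks_mul_fromRows, fromRows_mul, fromRows_ext_iff] at h
  obtain ⟨htop, hbot⟩ := h
  calc a * P₁ = (a + X * C * Q) * P₁ + -(X * C) * P₂ + X * (-(C * Q) * P₁ + C * P₂) := by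
        simp only [Matrix.add_mul, Matrix.mul_add, Matrix.neg_mul, Matrix.mul_neg,
          Matrix.mul_assoc]
        abel
    _ = P₁ * Λ + X * (P₂ * Λ) := by rw [htop, hbot]

variable {K : Type*} [CommRing K] {n m : Type*} [Fintype n] [DecidableEq n] [Fintype m]
  [DecidableEq m]

theorem eq_one_add_mul_mul_conj {a X P₁ P₂ Λ : Matrix n n K} (hP₁ : IsUnit P₁)
    (h : a * P₁ = P₁ * Λ + X * (P₂ * Λ)) :
    a = (1 + X * (P₂ * P₁⁻¹)) * (P₁ * Λ * P₁⁻¹) := by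
  have hP₁det := (isUnit_iff_isUnit_det P₁).1 hP₁
  calc a = a * P₁ * P₁⁻¹ := by rw [Matrix.mul_assoc, mul_nonsing_inv _ hP₁det, Matrix.mul_one]
    _ = (P₁ * Λ + X * (P₂ * (P₁⁻¹ * P₁) * Λ)) * P₁⁻¹ := by
        rw [h, nonsing_inv_mul _ hP₁det, Matrix.mul_one]
    _ = (1 + X * (P₂ * P₁⁻¹)) * (P₁ * Λ * P₁⁻¹) := by noncomm_ring

theorem isUnit_add_mul_of_isUnit_one_add_mul {r : Matrix m m K} {b : Matrix n m K}
    {c : Matrix m n K} (hr : IsUnit r) (h : IsUnit (1 + b * r⁻¹ * c)) : IsUnit (r + c * b) := by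
  have hr' := (isUnit_iff_isUnit_det r).1 hr
  have hfac : r + c * b = r * (1 + r⁻¹ * c * b) := by
    rw [Matrix.mul_add, Matrix.mul_one, ← Matrix.mul_assoc, ← Matrix.mul_assoc,
      mul_nonsing_inv _ hr', Matrix.one_mul]
  rw [isUnit_iff_isUnit_det, hfac, det_mul, det_one_add_mul_comm, ← Matrix.mul_assoc]
  exact hr'.mul ((isUnit_iff_isUnit_det _).1 h)

theorem inv_one_add_mul_mul_eq_sub {r : Matrix m m K} {b : Matrix n m K} {c : Matrix m n K}
    (hr : IsUnit r) (h : IsUnit (r + c * b)) :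
    (1 + b * r⁻¹ * c)⁻¹ = 1 - b * (r + c * b)⁻¹ * c := by
  have hr' := (isUnit_iff_isUnit_det r).1 hr
  have := add_mul_mul_inv_eq_sub 1 b r⁻¹ c isUnit_one (isUnit_nonsing_inv_iff.2 hr)
    (by rwa [nonsing_inv_nonsing_inv _ hr', inv_one, Matrix.mul_one])
  rwa [nonsing_inv_nonsing_inv _ hr', inv_one, Matrix.mul_one, Matrix.one_mul,
    Matrix.mul_one] at this

theorem spectrum_conj_nonsing_inv {P : Matrix n n K} (hP : IsUnit P) (M : Matrix n n K) :
    spectrum K (P * M * P⁻¹) = spectrum K M := by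
  rw [← hP.unit_spec, ← coe_units_inv, spectrum.units_conjugate]

theorem exists_mulVec_eq_smul_iff_mem_spectrum {F : Type*} [Field F] (M : Matrix n n F)
    (μ : F) : (∃ v, v ≠ 0 ∧ M *ᵥ v = μ • v) ↔ μ ∈ spectrum F M := by
  rw [← spectrum_toLin', ← Module.End.hasEigenvalue_iff_mem_spectrum]
  constructor
  · rintro ⟨v, hv, hMv⟩
    exact Module.End.hasEigenvalue_of_hasEigenvector ⟨Module.End.mem_eigenspace_iff.2 hMv, hv⟩
  · intro hμ
    obtain ⟨v, hv_mem, hv⟩ := hμ.exists_hasEigenvector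
    exact ⟨v, hv, Module.End.mem_eigenspace_iff.1 hv_mem⟩

theorem IsDiag.mem_spectrum_iff {F : Type*} [Field F] {Λ : Matrix n n F} (hΛ : Λ.IsDiag)
    (μ : F) : μ ∈ spectrum F Λ ↔ ∃ i, Λ i i = μ := by
  conv_lhs => rw [← hΛ.diagonal_diag, spectrum_diagonal]
  rfl

end Matrix

theorem discrete_closed_loop_eigenvalues_general {n m : ℕ}
    (A Q : Matrix (Fin n) (Fin n) ℝ) (hA : IsUnit A)
    (B : Matrix (Fin n) (Fin m) ℝ)
    (R : Matrix (Fin m) (Fin m) ℝ) (hR : IsUnit R)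
    (P₁ P₂ Λ : Matrix (Fin n) (Fin n) ℂ) (hΛ : Λ.IsDiag)
    (hP₁ : IsUnit P₁)
    (hInv :
      Matrix.fromBlocks
          (A.map Complex.ofReal +
            (B.map Complex.ofReal) * (R.map Complex.ofReal)⁻¹ * (B.map Complex.ofReal)ᵀ *
              ((A.map Complex.ofReal)ᵀ)⁻¹ * (Q.map Complex.ofReal))
          (-((B.map Complex.ofReal) * (R.map Complex.ofReal)⁻¹ * (B.map Complex.ofReal)ᵀ *
              ((A.map Complex.ofReal)ᵀ)⁻¹))
          (-(((A.map Complex.ofReal)ᵀ)⁻¹ * (Q.map Complex.ofReal)))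
          (((A.map Complex.ofReal)ᵀ)⁻¹) * Matrix.fromRows P₁ P₂ =
        Matrix.fromRows P₁ P₂ * Λ)
    (P : Matrix (Fin n) (Fin n) ℂ) (hPdef : P = P₂ * P₁⁻¹) :
    IsUnit (R.map Complex.ofReal + (B.map Complex.ofReal)ᵀ * P * (B.map Complex.ofReal)) ∧
    A.map Complex.ofReal -
        (B.map Complex.ofReal) *
          (R.map Complex.ofReal + (B.map Complex.ofReal)ᵀ * P * (B.map Complex.ofReal))⁻¹ *
          (B.map Complex.ofReal)ᵀ * P * (A.map Complex.ofReal) = P₁ * Λ * P₁⁻¹ ∧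
    ∀ μ : ℂ,
      (∃ v : Fin n → ℂ, v ≠ 0 ∧
        (A.map Complex.ofReal -
          (B.map Complex.ofReal) *
            (R.map Complex.ofReal + (B.map Complex.ofReal)ᵀ * P * (B.map Complex.ofReal))⁻¹ *
            (B.map Complex.ofReal)ᵀ * P * (A.map Complex.ofReal)).mulVec v = μ • v) ↔
        ∃ i : Fin n, Λ i i = μ := by
  set a := A.map Complex.ofReal
  set b := B.map Complex.ofReal
  set r := R.map Complex.ofReal
  have ha : IsUnit a := hA.map Complex.ofRealHom.mapMatrix
  have hr : IsUnit r := hR.map Complex.ofRealHom.mapMatrix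
  have ha_fac : a = (1 + b * r⁻¹ * (bᵀ * P)) * (P₁ * Λ * P₁⁻¹) := by
    rw [hPdef, ← Matrix.mul_assoc (b * r⁻¹)]
    exact eq_one_add_mul_mul_conj hP₁ (mul_eq_of_fromBlocks_mul_fromRows hInv)
  have hM : IsUnit (1 + b * r⁻¹ * (bᵀ * P)) := isUnit_of_mul_isUnit_left (ha_fac ▸ ha)
  have hS : IsUnit (r + bᵀ * P * b) := isUnit_add_mul_of_isUnit_one_add_mul hr hM
  have hAcl : a - b * (r + bᵀ * P * b)⁻¹ * bᵀ * P * a = P₁ * Λ * P₁⁻¹ := by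
    calc a - b * (r + bᵀ * P * b)⁻¹ * bᵀ * P * a
        = (1 - b * (r + bᵀ * P * b)⁻¹ * (bᵀ * P)) * a := by
          simp only [Matrix.sub_mul, Matrix.one_mul, Matrix.mul_assoc]
      _ = (1 + b * r⁻¹ * (bᵀ * P))⁻¹ * a := by rw [inv_one_add_mul_mul_eq_sub hr hS]
      _ = P₁ * Λ * P₁⁻¹ := by
          rw [ha_fac, ← Matrix.mul_assoc, nonsing_inv_mul _ ((isUnit_iff_isUnit_det _).1 hM),
            Matrix.one_mul]
  refine ⟨hS, hAcl, fun μ => ?_⟩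
  rw [hAcl, exists_mulVec_eq_smul_iff_mem_spectrum, spectrum_conj_nonsing_inv hP₁,
    hΛ.mem_spectrum_iff]

/-- If `H_d·[P₁;P₂] = [P₁;P₂]·Λ₁` over `ℂ` with `Λ₁` diagonal and both
`P₁, P₂` invertible, then for `P := P₂·P₁⁻¹` the matrix `R + BᵀPB` is invertible and the
discrete-time closed-loop matrix `A_cl = A − B(R + BᵀPB)⁻¹BᵀPA` equals `P₁·Λ₁·P₁⁻¹`; in
particular its eigenvalues are exactly the diagonal entries of `Λ₁`. -/
theorem discrete_closed_loop_eigenvalues {n m : ℕ}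
    (A Q : Matrix (Fin n) (Fin n) ℝ) (hA : IsUnit A)
    (B : Matrix (Fin n) (Fin m) ℝ)
    (R : Matrix (Fin m) (Fin m) ℝ) (hR : IsUnit R)
    (P₁ P₂ Λ : Matrix (Fin n) (Fin n) ℂ) (hΛ : Λ.IsDiag)
    (hP₁ : IsUnit P₁) (hP₂ : IsUnit P₂)
    (hInv :
      Matrix.fromBlocks
          (A.map Complex.ofReal +
            (B.map Complex.ofReal) * (R.map Complex.ofReal)⁻¹ * (B.map Complex.ofReal)ᵀ *
              ((A.map Complex.ofReal)ᵀ)⁻¹ * (Q.map Complex.ofReal))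
          (-((B.map Complex.ofReal) * (R.map Complex.ofReal)⁻¹ * (B.map Complex.ofReal)ᵀ *
              ((A.map Complex.ofReal)ᵀ)⁻¹))
          (-(((A.map Complex.ofReal)ᵀ)⁻¹ * (Q.map Complex.ofReal)))
          (((A.map Complex.ofReal)ᵀ)⁻¹) * Matrix.fromRows P₁ P₂ =
        Matrix.fromRows P₁ P₂ * Λ)
    (P : Matrix (Fin n) (Fin n) ℂ) (hPdef : P = P₂ * P₁⁻¹) :
    IsUnit (R.map Complex.ofReal + (B.map Complex.ofReal)ᵀ * P * (B.map Complex.ofReal)) ∧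
    A.map Complex.ofReal -
        (B.map Complex.ofReal) *
          (R.map Complex.ofReal + (B.map Complex.ofReal)ᵀ * P * (B.map Complex.ofReal))⁻¹ *
          (B.map Complex.ofReal)ᵀ * P * (A.map Complex.ofReal) = P₁ * Λ * P₁⁻¹ ∧
    ∀ μ : ℂ,
      (∃ v : Fin n → ℂ, v ≠ 0 ∧
        (A.map Complex.ofReal -
          (B.map Complex.ofReal) *
            (R.map Complex.ofReal + (B.map Complex.ofReal)ᵀ * P * (B.map Complex.ofReal))⁻¹ *
            (B.map Complex.ofReal)ᵀ * P * (A.map Complex.ofReal)).mulVec v = μ • v) ↔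
        ∃ i : Fin n, Λ i i = μ :=
  discrete_closed_loop_eigenvalues_general A Q hA B R hR P₁ P₂ Λ hΛ hP₁ hInv P hPdef
end
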